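/- arXiv:2512.10482 — 7 statements merged into one kernel-verified Lean document; each statement's English description precedes it below -/
import Mathlib

section
/- Let V, g, E = V ⊕ V* ⊕ g and 𝒥 with components (J, A, B, C, μ, ν) be as above, satisfying 𝒥* = -𝒥 and 𝒥² = -Id, and assume B : V* → V is bijective. Set Ã := A + νB⁻¹ν*. Then Ã is skew-symmetric, Ã² = -Id_g, JB - BJ* = ν*ν, and moreover C = -B⁻¹(ν*Ãν B⁻¹ + Id) - J*B⁻¹J and μ = νB⁻¹J - ÃνB⁻¹. -/
/-- The canonical pairing on `E = V ⊕ V* ⊕ g`. -/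
noncomputable def pairE {V g : Type*} [AddCommGroup V] [Module ℝ V] [AddCommGroup g] [Module ℝ g]
    (bg : LinearMap.BilinForm ℝ g) (u v : V × Module.Dual ℝ V × g) : ℝ :=
  (1 / 2 : ℝ) * (v.2.1 u.1 + u.2.1 v.1) + bg u.2.2 v.2.2

/-- The block endomorphism `𝒥` of `E = V ⊕ V* ⊕ g` with components `(J, A, B, C, μ, ν)`. -/
noncomputable def JblockE {V g : Type*} [AddCommGroup V] [Module ℝ V] [AddCommGroup g] [Module ℝ g]
    (J : V →ₗ[ℝ] V) (B : Module.Dual ℝ V →ₗ[ℝ] V) (C : V →ₗ[ℝ] Module.Dual ℝ V)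
    (A : g →ₗ[ℝ] g) (μ : V →ₗ[ℝ] g) (ν : Module.Dual ℝ V →ₗ[ℝ] g)
    (νs : g →ₗ[ℝ] V) (μs : g →ₗ[ℝ] Module.Dual ℝ V)
    (u : V × Module.Dual ℝ V × g) : V × Module.Dual ℝ V × g :=
  (J u.1 + B u.2.1 - νs u.2.2,
   C u.1 - J.dualMap u.2.1 - μs u.2.2,
   μ u.1 + ν u.2.1 + A u.2.2)

/-! Evaluating `𝒥² = -1` on `V*` and on `g` gives `JB - BJ* = ν*ν`, `μB = νJ* - Aν`,
`Bμ* = -Jν* - ν*A` and `A² = μν* + νμ* - 1`. Composing with `B⁻¹` solves the first three for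
`B⁻¹ν*νB⁻¹`, `μ` and `μ*`; substituting these into `A²` and into the `V`-block
`BC = -1 - J² + ν*μ` gives `Ã² = -1` and the formula for `C`. Skew-symmetry of `Ã` comes from that
of `A` and of `B⁻¹`, which inherits it from `B`. -/

section BlockEquations

variable {V g : Type*} [AddCommGroup V] [Module ℝ V] [AddCommGroup g] [Module ℝ g]
  {J : V →ₗ[ℝ] V} {B : Module.Dual ℝ V →ₗ[ℝ] V} {C : V →ₗ[ℝ] Module.Dual ℝ V}
  {A : g →ₗ[ℝ] g} {μ : V →ₗ[ℝ] g} {ν : Module.Dual ℝ V →ₗ[ℝ] g}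
  {νs : g →ₗ[ℝ] V} {μs : g →ₗ[ℝ] Module.Dual ℝ V}

local notation "𝒥" => JblockE J B C A μ ν νs μs

theorem JblockE_sq_on_V (hsq : ∀ u, 𝒥 (𝒥 u) = -u) (X : V) :
    B (C X) = -X - J (J X) + νs (μ X) := by
  have h := congrArg Prod.fst (hsq (X, 0, 0))
  simp only [JblockE, map_zero, add_zero, sub_zero, Prod.fst_neg] at h
  linear_combination (norm := module) h

theorem JblockE_sq_on_dual (hsq : ∀ u, 𝒥 (𝒥 u) = -u) (ξ : Module.Dual ℝ V) :
    J (B ξ) - B (J.dualMap ξ) = νs (ν ξ) ∧ μ (B ξ) = ν (J.dualMap ξ) - A (ν ξ) := by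
  have h := hsq (0, ξ, 0)
  simp only [JblockE, map_zero, map_neg, zero_add, add_zero, sub_zero, zero_sub, Prod.neg_mk,
    neg_zero, Prod.mk.injEq] at h
  obtain ⟨h₁, -, h₃⟩ := h
  exact ⟨by linear_combination (norm := module) h₁, by linear_combination (norm := module) h₃⟩

theorem JblockE_sq_on_g (hsq : ∀ u, 𝒥 (𝒥 u) = -u) (r : g) :
    B (μs r) = -J (νs r) - νs (A r) ∧ A (A r) = μ (νs r) + ν (μs r) - r := by
  have h := hsq (0, 0, r)
  simp only [JblockE, map_zero, map_neg, zero_add, add_zero, sub_zero, zero_sub, Prod.neg_mk,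
    neg_zero, Prod.mk.injEq] at h
  obtain ⟨h₁, -, h₃⟩ := h
  exact ⟨by linear_combination (norm := module) -h₁, by linear_combination (norm := module) h₃⟩

theorem JblockE_skew_on_dual {bg : LinearMap.BilinForm ℝ g}
    (hskew : ∀ u v, pairE bg (𝒥 u) v = -pairE bg u (𝒥 v)) (ξ η : Module.Dual ℝ V) :
    η (B ξ) = -ξ (B η) := by
  have h := hskew (0, ξ, 0) (0, η, 0)
  simp only [pairE, JblockE, map_zero, zero_add, add_zero, sub_zero, LinearMap.zero_apply] at h
  linarith

theorem JblockE_skew_on_g {bg : LinearMap.BilinForm ℝ g}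
    (hskew : ∀ u v, pairE bg (𝒥 u) v = -pairE bg u (𝒥 v)) (r s : g) :
    bg (A r) s = -bg r (A s) := by
  have h := hskew (0, 0, r) (0, 0, s)
  simp only [pairE, JblockE, map_zero, zero_add, LinearMap.zero_apply, mul_zero] at h
  exact h

end BlockEquations

section InverseOfB

variable {V g : Type*} [AddCommGroup V] [Module ℝ V] [AddCommGroup g] [Module ℝ g]
  {J : V →ₗ[ℝ] V} {B : Module.Dual ℝ V →ₗ[ℝ] V} {C : V →ₗ[ℝ] Module.Dual ℝ V}
  {A : g →ₗ[ℝ] g} {μ : V →ₗ[ℝ] g} {ν : Module.Dual ℝ V →ₗ[ℝ] g}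
  {νs : g →ₗ[ℝ] V} {μs : g →ₗ[ℝ] Module.Dual ℝ V} {Binv : V →ₗ[ℝ] Module.Dual ℝ V}

local notation "Ã" => A + ν ∘ₗ Binv ∘ₗ νs

theorem Binv_skew_of_B_skew (hB : ∀ ξ η : Module.Dual ℝ V, η (B ξ) = -ξ (B η))
    (hB2 : ∀ X, B (Binv X) = X) (X Y : V) : Binv Y X = -Binv X Y := by
  simpa only [hB2] using hB (Binv X) (Binv Y)

theorem Binv_νs_ν_Binv (hB1 : ∀ ξ, Binv (B ξ) = ξ) (hB2 : ∀ X, B (Binv X) = X)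
    (hJB : ∀ ξ, J (B ξ) - B (J.dualMap ξ) = νs (ν ξ)) (X : V) :
    Binv (νs (ν (Binv X))) = Binv (J X) - J.dualMap (Binv X) := by
  rw [← hJB, map_sub, hB2, hB1]

theorem μ_apply_of_μ_comp_B (hB2 : ∀ X, B (Binv X) = X)
    (hμB : ∀ ξ, μ (B ξ) = ν (J.dualMap ξ) - A (ν ξ)) (X : V) :
    μ X = ν (J.dualMap (Binv X)) - A (ν (Binv X)) := by
  rw [← hμB, hB2]

theorem μs_apply_of_B_comp_μs (hB1 : ∀ ξ, Binv (B ξ) = ξ)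
    (hBμs : ∀ r, B (μs r) = -J (νs r) - νs (A r)) (r : g) :
    μs r = -Binv (J (νs r)) - Binv (νs (A r)) := by
  rw [← hB1 (μs r), hBμs, map_sub, map_neg]

theorem μ_apply_eq (hB1 : ∀ ξ, Binv (B ξ) = ξ) (hB2 : ∀ X, B (Binv X) = X)
    (hJB : ∀ ξ, J (B ξ) - B (J.dualMap ξ) = νs (ν ξ))
    (hμB : ∀ ξ, μ (B ξ) = ν (J.dualMap ξ) - A (ν ξ)) (X : V) :
    μ X = ν (Binv (J X)) - (Ã) (ν (Binv X)) := by
  simp only [μ_apply_of_μ_comp_B hB2 hμB, LinearMap.add_apply, LinearMap.comp_apply,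
    Binv_νs_ν_Binv hB1 hB2 hJB, map_sub]
  abel

theorem skew_add_ν_Binv_νs {bg : LinearMap.BilinForm ℝ g} (hbg_symm : ∀ r s, bg r s = bg s r)
    (hνs : ∀ r ξ, ξ (νs r) = 2 * bg r (ν ξ)) (hA : ∀ r s, bg (A r) s = -bg r (A s))
    (hBinv : ∀ X Y : V, Binv Y X = -Binv X Y) (r s : g) :
    bg ((Ã) r) s = -bg r ((Ã) s) := by
  have h := hBinv (νs s) (νs r)
  rw [hνs, hνs, hbg_symm s] at h
  simp only [LinearMap.add_apply, LinearMap.comp_apply, map_add, hA]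
  linarith

theorem add_ν_Binv_νs_sq (hB1 : ∀ ξ, Binv (B ξ) = ξ) (hB2 : ∀ X, B (Binv X) = X)
    (hJB : ∀ ξ, J (B ξ) - B (J.dualMap ξ) = νs (ν ξ))
    (hμB : ∀ ξ, μ (B ξ) = ν (J.dualMap ξ) - A (ν ξ))
    (hBμs : ∀ r, B (μs r) = -J (νs r) - νs (A r))
    (hAA : ∀ r, A (A r) = μ (νs r) + ν (μs r) - r) (r : g) :
    (Ã) ((Ã) r) = -r := by
  simp only [LinearMap.add_apply, LinearMap.comp_apply, map_add, hAA,
    μ_apply_of_μ_comp_B hB2 hμB, μs_apply_of_B_comp_μs hB1 hBμs, Binv_νs_ν_Binv hB1 hB2 hJB, map_sub,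
    map_neg]
  abel

theorem C_apply_eq (hB1 : ∀ ξ, Binv (B ξ) = ξ) (hB2 : ∀ X, B (Binv X) = X)
    (hJB : ∀ ξ, J (B ξ) - B (J.dualMap ξ) = νs (ν ξ))
    (hμB : ∀ ξ, μ (B ξ) = ν (J.dualMap ξ) - A (ν ξ))
    (hBC : ∀ X, B (C X) = -X - J (J X) + νs (μ X)) (X : V) :
    C X = -Binv (νs ((Ã) (ν (Binv X))) + X) - J.dualMap (Binv (J X)) := by
  rw [← hB1 (C X), hBC, μ_apply_eq hB1 hB2 hJB hμB]
  simp only [map_add, map_sub, map_neg, Binv_νs_ν_Binv hB1 hB2 hJB]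
  abel

end InverseOfB

theorem stmt_3_general {V g : Type*} [AddCommGroup V] [Module ℝ V]
    [AddCommGroup g] [Module ℝ g]
    (bg : LinearMap.BilinForm ℝ g)
    (hbg_symm : ∀ r s : g, bg r s = bg s r)
    (J : V →ₗ[ℝ] V) (B : Module.Dual ℝ V →ₗ[ℝ] V) (C : V →ₗ[ℝ] Module.Dual ℝ V)
    (A : g →ₗ[ℝ] g) (μ : V →ₗ[ℝ] g) (ν : Module.Dual ℝ V →ₗ[ℝ] g)
    (νs : g →ₗ[ℝ] V) (μs : g →ₗ[ℝ] Module.Dual ℝ V)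
    (hνs : ∀ (r : g) (ξ : Module.Dual ℝ V), ξ (νs r) = 2 * bg r (ν ξ))
    (hskew : ∀ u v : V × Module.Dual ℝ V × g,
        pairE bg (JblockE J B C A μ ν νs μs u) v = - pairE bg u (JblockE J B C A μ ν νs μs v))
    (hsq : ∀ u : V × Module.Dual ℝ V × g,
        JblockE J B C A μ ν νs μs (JblockE J B C A μ ν νs μs u) = -u)
    (Binv : V →ₗ[ℝ] Module.Dual ℝ V)
    (hB1 : ∀ ξ : Module.Dual ℝ V, Binv (B ξ) = ξ)
    (hB2 : ∀ X : V, B (Binv X) = X) :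
    let Atil : g →ₗ[ℝ] g := A + (ν ∘ₗ Binv ∘ₗ νs)
    (∀ r s : g, bg (Atil r) s = - bg r (Atil s)) ∧
    (∀ r : g, Atil (Atil r) = -r) ∧
    (∀ ξ : Module.Dual ℝ V, J (B ξ) - B (J.dualMap ξ) = νs (ν ξ)) ∧
    (∀ X : V, C X = -(Binv (νs (Atil (ν (Binv X))) + X)) - J.dualMap (Binv (J X))) ∧
    (∀ X : V, μ X = ν (Binv (J X)) - Atil (ν (Binv X))) := by
  have hJB ξ := (JblockE_sq_on_dual hsq ξ).1
  have hμB ξ := (JblockE_sq_on_dual hsq ξ).2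
  have hBμs r := (JblockE_sq_on_g hsq r).1
  have hAA r := (JblockE_sq_on_g hsq r).2
  have hBinv := Binv_skew_of_B_skew (JblockE_skew_on_dual hskew) hB2
  exact ⟨skew_add_ν_Binv_νs hbg_symm hνs (JblockE_skew_on_g hskew) hBinv,
    add_ν_Binv_νs_sq hB1 hB2 hJB hμB hBμs hAA, hJB,
    C_apply_eq hB1 hB2 hJB hμB (JblockE_sq_on_V hsq), μ_apply_eq hB1 hB2 hJB hμB⟩

/-- For a skew-symmetric `𝒥` with `𝒥² = -Id` whose component
`B : V* → V` is bijective (with inverse `Binv`), the map `Ã := A + ν B⁻¹ ν*` is a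
skew-symmetric complex structure on `g`, `JB - BJ* = ν*ν`, and `C` and `μ` are
determined by `(J, Ã, B, ν)` by the stated formulas. -/
theorem stmt_3 {V g : Type*} [AddCommGroup V] [Module ℝ V] [FiniteDimensional ℝ V]
    [AddCommGroup g] [Module ℝ g] [FiniteDimensional ℝ g]
    (bg : LinearMap.BilinForm ℝ g)
    (hbg_symm : ∀ r s : g, bg r s = bg s r)
    (hbg_nd : ∀ r : g, (∀ s : g, bg r s = 0) → r = 0)
    (J : V →ₗ[ℝ] V) (B : Module.Dual ℝ V →ₗ[ℝ] V) (C : V →ₗ[ℝ] Module.Dual ℝ V)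
    (A : g →ₗ[ℝ] g) (μ : V →ₗ[ℝ] g) (ν : Module.Dual ℝ V →ₗ[ℝ] g)
    (νs : g →ₗ[ℝ] V) (μs : g →ₗ[ℝ] Module.Dual ℝ V)
    (hνs : ∀ (r : g) (ξ : Module.Dual ℝ V), ξ (νs r) = 2 * bg r (ν ξ))
    (hμs : ∀ (r : g) (X : V), μs r X = 2 * bg r (μ X))
    (hskew : ∀ u v : V × Module.Dual ℝ V × g,
        pairE bg (JblockE J B C A μ ν νs μs u) v = - pairE bg u (JblockE J B C A μ ν νs μs v))
    (hsq : ∀ u : V × Module.Dual ℝ V × g,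
        JblockE J B C A μ ν νs μs (JblockE J B C A μ ν νs μs u) = -u)
    (Binv : V →ₗ[ℝ] Module.Dual ℝ V)
    (hB1 : ∀ ξ : Module.Dual ℝ V, Binv (B ξ) = ξ)
    (hB2 : ∀ X : V, B (Binv X) = X) :
    let Atil : g →ₗ[ℝ] g := A + (ν ∘ₗ Binv ∘ₗ νs)
    (∀ r s : g, bg (Atil r) s = - bg r (Atil s)) ∧
    (∀ r : g, Atil (Atil r) = -r) ∧
    (∀ ξ : Module.Dual ℝ V, J (B ξ) - B (J.dualMap ξ) = νs (ν ξ)) ∧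
    (∀ X : V, C X = -(Binv (νs (Atil (ν (Binv X))) + X)) - J.dualMap (Binv (J X))) ∧
    (∀ X : V, μ X = ν (Binv (J X)) - Atil (ν (Binv X))) :=
  stmt_3_general bg hbg_symm J B C A μ ν νs μs hνs hskew hsq Binv hB1 hB2
end

section
/- Conversely: let V, g be as above, B : V* → V bijective with B* = -B, Ã ∈ End(g) with Ã* = -Ã and Ã² = -Id, J ∈ End(V) and ν : V* → g satisfying JB - BJ* = ν*ν. Define A := Ã - νB⁻¹ν*, C := -B⁻¹(ν*Ãν B⁻¹ + Id) - J*B⁻¹J, and μ := νB⁻¹J - ÃνB⁻¹. Then the endomorphism 𝒥 of E = V ⊕ V* ⊕ g with components (J, A, B, C, μ, ν) satisfies 𝒥* = -𝒥 and 𝒥² = -Id. -/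
/-!
`𝒥` is skew for the pairing as soon as `B`, `C`, `A` are skew and `ν*`, `μ*` are the adjoints
of `ν`, `μ`; and `𝒥² = -Id` amounts to nine block identities. Skewness of the prescribed `A` and
`C` comes from that of `B⁻¹` and `Ã`. For the square, eliminating `J` through
`J = (BJ* + ν*ν)B⁻¹` turns each of the nine block identities into a formal consequence of
`BB⁻¹ = B⁻¹B = Id` and `Ã² = -Id`.
-/

section Criteria

variable {V g : Type*} [AddCommGroup V] [Module ℝ V] [AddCommGroup g] [Module ℝ g]
  {J : V →ₗ[ℝ] V} {B : Module.Dual ℝ V →ₗ[ℝ] V} {C : V →ₗ[ℝ] Module.Dual ℝ V}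
  {A : g →ₗ[ℝ] g} {μ : V →ₗ[ℝ] g} {ν : Module.Dual ℝ V →ₗ[ℝ] g}
  {νs : g →ₗ[ℝ] V} {μs : g →ₗ[ℝ] Module.Dual ℝ V}

theorem pairE_JblockE_eq_neg {bg : LinearMap.BilinForm ℝ g} (hbg : ∀ r s : g, bg r s = bg s r)
    (hB : ∀ ξ η : Module.Dual ℝ V, η (B ξ) = -ξ (B η))
    (hC : ∀ X Y : V, C X Y = -C Y X)
    (hA : ∀ r s : g, bg (A r) s = -bg r (A s))
    (hν : ∀ (r : g) (ξ : Module.Dual ℝ V), ξ (νs r) = 2 * bg r (ν ξ))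
    (hμ : ∀ (r : g) (X : V), μs r X = 2 * bg r (μ X))
    (u v : V × Module.Dual ℝ V × g) :
    pairE bg (JblockE J B C A μ ν νs μs u) v = -pairE bg u (JblockE J B C A μ ν νs μs v) := by
  obtain ⟨X, ξ, r⟩ := u
  obtain ⟨Y, η, s⟩ := v
  simp only [pairE, JblockE, LinearMap.add_apply, LinearMap.sub_apply, map_add, map_sub,
    LinearMap.dualMap_apply]
  linear_combination (1 / 2 : ℝ) * hB ξ η + (1 / 2 : ℝ) * hC X Y - (1 / 2 : ℝ) * hν r η
    - (1 / 2 : ℝ) * hν s ξ - (1 / 2 : ℝ) * hμ r Y - (1 / 2 : ℝ) * hμ s X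
    + hbg (μ X) s + hbg (ν ξ) s + hA r s

theorem JblockE_JblockE_eq_neg
    (h11 : ∀ X, J (J X) + B (C X) - νs (μ X) = -X)
    (h12 : ∀ ξ, J (B ξ) - B (J.dualMap ξ) - νs (ν ξ) = 0)
    (h13 : ∀ r, -J (νs r) - B (μs r) - νs (A r) = 0)
    (h21 : ∀ X, C (J X) - J.dualMap (C X) - μs (μ X) = 0)
    (h22 : ∀ ξ, C (B ξ) + J.dualMap (J.dualMap ξ) - μs (ν ξ) = -ξ)
    (h23 : ∀ r, -C (νs r) + J.dualMap (μs r) - μs (A r) = 0)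
    (h31 : ∀ X, μ (J X) + ν (C X) + A (μ X) = 0)
    (h32 : ∀ ξ, μ (B ξ) - ν (J.dualMap ξ) + A (ν ξ) = 0)
    (h33 : ∀ r, -μ (νs r) - ν (μs r) + A (A r) = -r)
    (u : V × Module.Dual ℝ V × g) :
    JblockE J B C A μ ν νs μs (JblockE J B C A μ ν νs μs u) = -u := by
  obtain ⟨X, ξ, r⟩ := u
  simp only [JblockE, map_add, map_sub, Prod.neg_mk]
  refine Prod.ext ?_ (Prod.ext ?_ ?_)
  · linear_combination (norm := module) h11 X + h12 ξ + h13 r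
  · linear_combination (norm := module) h21 X + h22 ξ + h23 r
  · linear_combination (norm := module) h31 X + h32 ξ + h33 r

end Criteria

section Construction

variable {V g : Type*} [AddCommGroup V] [Module ℝ V] [AddCommGroup g] [Module ℝ g]
  {bg : LinearMap.BilinForm ℝ g} {B : Module.Dual ℝ V →ₗ[ℝ] V} {Binv : V →ₗ[ℝ] Module.Dual ℝ V}
  {Atil : g →ₗ[ℝ] g} {J : V →ₗ[ℝ] V} {ν : Module.Dual ℝ V →ₗ[ℝ] g} {νs : g →ₗ[ℝ] V}
  {μs : g →ₗ[ℝ] Module.Dual ℝ V}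

variable (Binv Atil ν νs) in
def inducedA : g →ₗ[ℝ] g := Atil - ν ∘ₗ Binv ∘ₗ νs

variable (Binv Atil J ν νs) in
def inducedC : V →ₗ[ℝ] Module.Dual ℝ V :=
  -(Binv ∘ₗ νs ∘ₗ Atil ∘ₗ ν ∘ₗ Binv) - Binv - (J.dualMap ∘ₗ Binv ∘ₗ J)

variable (Binv Atil J ν) in
def inducedμ : V →ₗ[ℝ] g := (ν ∘ₗ Binv ∘ₗ J) - (Atil ∘ₗ ν ∘ₗ Binv)

theorem inv_apply_apply_eq_neg (hB2 : ∀ X : V, B (Binv X) = X)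
    (hBskew : ∀ ξ η : Module.Dual ℝ V, η (B ξ) = -ξ (B η)) (X Y : V) :
    Binv X Y = -Binv Y X := by
  simpa only [hB2] using hBskew (Binv Y) (Binv X)

theorem inv_νs_apply (hQ : ∀ X Y : V, Binv X Y = -Binv Y X)
    (hνs : ∀ (r : g) (ξ : Module.Dual ℝ V), ξ (νs r) = 2 * bg r (ν ξ)) (r : g) (X : V) :
    Binv (νs r) X = -2 * bg r (ν (Binv X)) := by
  rw [hQ, hνs]
  ring

theorem inducedA_skew (hbg : ∀ r s : g, bg r s = bg s r) (hQ : ∀ X Y : V, Binv X Y = -Binv Y X)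
    (hνs : ∀ (r : g) (ξ : Module.Dual ℝ V), ξ (νs r) = 2 * bg r (ν ξ))
    (hAskew : ∀ r s : g, bg (Atil r) s = -bg r (Atil s)) (r s : g) :
    bg (inducedA Binv Atil ν νs r) s = -bg r (inducedA Binv Atil ν νs s) := by
  simp only [inducedA, LinearMap.sub_apply, LinearMap.comp_apply, map_sub]
  linear_combination hAskew r s + (1 / 2 : ℝ) * hνs s (Binv (νs r))
    + (1 / 2 : ℝ) * hνs r (Binv (νs s)) - hbg (ν (Binv (νs r))) s
    - (1 / 2 : ℝ) * hQ (νs r) (νs s)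

theorem inducedC_skew (hbg : ∀ r s : g, bg r s = bg s r) (hQ : ∀ X Y : V, Binv X Y = -Binv Y X)
    (hνs : ∀ (r : g) (ξ : Module.Dual ℝ V), ξ (νs r) = 2 * bg r (ν ξ))
    (hAskew : ∀ r s : g, bg (Atil r) s = -bg r (Atil s)) (X Y : V) :
    inducedC Binv Atil J ν νs X Y = -inducedC Binv Atil J ν νs Y X := by
  simp only [inducedC, LinearMap.sub_apply, LinearMap.neg_apply, LinearMap.comp_apply,
    LinearMap.dualMap_apply]
  linear_combination - inv_νs_apply hQ hνs (Atil (ν (Binv X))) Y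
    - inv_νs_apply hQ hνs (Atil (ν (Binv Y))) X + 2 * hAskew (ν (Binv X)) (ν (Binv Y))
    - 2 * hbg (ν (Binv X)) (Atil (ν (Binv Y))) - hQ X Y - hQ (J X) (J Y)

theorem adjoint_inducedμ_eq (hQ : ∀ X Y : V, Binv X Y = -Binv Y X)
    (hνs : ∀ (r : g) (ξ : Module.Dual ℝ V), ξ (νs r) = 2 * bg r (ν ξ))
    (hAskew : ∀ r s : g, bg (Atil r) s = -bg r (Atil s))
    (hμs : ∀ (r : g) (X : V), μs r X = 2 * bg r (inducedμ Binv Atil J ν X)) (s : g) :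
    μs s = -J.dualMap (Binv (νs s)) - Binv (νs (Atil s)) := by
  ext X
  simp only [hμs, inducedμ, LinearMap.sub_apply, LinearMap.neg_apply, LinearMap.comp_apply,
    LinearMap.dualMap_apply, map_sub]
  linear_combination inv_νs_apply hQ hνs s (J X) + inv_νs_apply hQ hνs (Atil s) X
    - 2 * hAskew s (ν (Binv X))

theorem JblockE_induced_sq_eq_neg (hB1 : ∀ ξ : Module.Dual ℝ V, Binv (B ξ) = ξ)
    (hB2 : ∀ X : V, B (Binv X) = X)
    (hAsq : ∀ r : g, Atil (Atil r) = -r)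
    (hJB : ∀ ξ : Module.Dual ℝ V, J (B ξ) - B (J.dualMap ξ) = νs (ν ξ))
    (hμs : ∀ s : g, μs s = -J.dualMap (Binv (νs s)) - Binv (νs (Atil s)))
    (u : V × Module.Dual ℝ V × g) :
    JblockE J B (inducedC Binv Atil J ν νs) (inducedA Binv Atil ν νs) (inducedμ Binv Atil J ν)
      ν νs μs (JblockE J B (inducedC Binv Atil J ν νs) (inducedA Binv Atil ν νs)
        (inducedμ Binv Atil J ν) ν νs μs u) = -u := by
  have hJ (X : V) : J X = B (J.dualMap (Binv X)) + νs (ν (Binv X)) :=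
    sub_eq_iff_eq_add'.1 (by simpa only [hB2] using hJB (Binv X))
  refine JblockE_JblockE_eq_neg ?_ ?_ ?_ ?_ ?_ ?_ ?_ ?_ ?_ u <;> intro <;>
    simp only [inducedA, inducedC, inducedμ, LinearMap.sub_apply, LinearMap.neg_apply,
      LinearMap.comp_apply, map_add, map_sub, map_neg, hB1, hB2, hAsq, hμs, hJ] <;>
    module

end Construction

theorem stmt_4_general {V g : Type*} [AddCommGroup V] [Module ℝ V]
    [AddCommGroup g] [Module ℝ g]
    (bg : LinearMap.BilinForm ℝ g)
    (hbg_symm : ∀ r s : g, bg r s = bg s r)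
    (B : Module.Dual ℝ V →ₗ[ℝ] V) (Binv : V →ₗ[ℝ] Module.Dual ℝ V)
    (hB1 : ∀ ξ : Module.Dual ℝ V, Binv (B ξ) = ξ)
    (hB2 : ∀ X : V, B (Binv X) = X)
    (hBskew : ∀ ξ η : Module.Dual ℝ V, η (B ξ) = - ξ (B η))
    (Atil : g →ₗ[ℝ] g)
    (hAskew : ∀ r s : g, bg (Atil r) s = - bg r (Atil s))
    (hAsq : ∀ r : g, Atil (Atil r) = -r)
    (J : V →ₗ[ℝ] V) (ν : Module.Dual ℝ V →ₗ[ℝ] g) (νs : g →ₗ[ℝ] V)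
    (hνs : ∀ (r : g) (ξ : Module.Dual ℝ V), ξ (νs r) = 2 * bg r (ν ξ))
    (hJB : ∀ ξ : Module.Dual ℝ V, J (B ξ) - B (J.dualMap ξ) = νs (ν ξ))
    (μs : g →ₗ[ℝ] Module.Dual ℝ V)
    (hμs : ∀ (r : g) (X : V),
      μs r X = 2 * bg r (ν (Binv (J X)) - Atil (ν (Binv X)))) :
    let A : g →ₗ[ℝ] g := Atil - (ν ∘ₗ Binv ∘ₗ νs)
    let C : V →ₗ[ℝ] Module.Dual ℝ V :=
      -(Binv ∘ₗ νs ∘ₗ Atil ∘ₗ ν ∘ₗ Binv) - Binv - (J.dualMap ∘ₗ Binv ∘ₗ J)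
    let μ : V →ₗ[ℝ] g := (ν ∘ₗ Binv ∘ₗ J) - (Atil ∘ₗ ν ∘ₗ Binv)
    (∀ u v : V × Module.Dual ℝ V × g,
        pairE bg (JblockE J B C A μ ν νs μs u) v = - pairE bg u (JblockE J B C A μ ν νs μs v)) ∧
    (∀ u : V × Module.Dual ℝ V × g,
        JblockE J B C A μ ν νs μs (JblockE J B C A μ ν νs μs u) = -u) := by
  intro A C μ
  have hQ := inv_apply_apply_eq_neg hB2 hBskew
  exact ⟨pairE_JblockE_eq_neg hbg_symm hBskew (inducedC_skew hbg_symm hQ hνs hAskew)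
      (inducedA_skew hbg_symm hQ hνs hAskew) hνs hμs,
    JblockE_induced_sq_eq_neg hB1 hB2 hAsq hJB (adjoint_inducedμ_eq hQ hνs hAskew hμs)⟩

/-- Conversely, given `B` bijective and skew, `Ã` a skew-symmetric
complex structure on `g`, `J` and `ν` with `JB - BJ* = ν*ν`, the endomorphism `𝒥`
with components `A := Ã - νB⁻¹ν*`, `C := -B⁻¹(ν*ÃνB⁻¹ + Id) - J*B⁻¹J`,
`μ := νB⁻¹J - ÃνB⁻¹` satisfies `𝒥* = -𝒥` and `𝒥² = -Id`. -/
theorem stmt_4 {V g : Type*} [AddCommGroup V] [Module ℝ V] [FiniteDimensional ℝ V]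
    [AddCommGroup g] [Module ℝ g] [FiniteDimensional ℝ g]
    (bg : LinearMap.BilinForm ℝ g)
    (hbg_symm : ∀ r s : g, bg r s = bg s r)
    (hbg_nd : ∀ r : g, (∀ s : g, bg r s = 0) → r = 0)
    (B : Module.Dual ℝ V →ₗ[ℝ] V) (Binv : V →ₗ[ℝ] Module.Dual ℝ V)
    (hB1 : ∀ ξ : Module.Dual ℝ V, Binv (B ξ) = ξ)
    (hB2 : ∀ X : V, B (Binv X) = X)
    (hBskew : ∀ ξ η : Module.Dual ℝ V, η (B ξ) = - ξ (B η))
    (Atil : g →ₗ[ℝ] g)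
    (hAskew : ∀ r s : g, bg (Atil r) s = - bg r (Atil s))
    (hAsq : ∀ r : g, Atil (Atil r) = -r)
    (J : V →ₗ[ℝ] V) (ν : Module.Dual ℝ V →ₗ[ℝ] g) (νs : g →ₗ[ℝ] V)
    (hνs : ∀ (r : g) (ξ : Module.Dual ℝ V), ξ (νs r) = 2 * bg r (ν ξ))
    (hJB : ∀ ξ : Module.Dual ℝ V, J (B ξ) - B (J.dualMap ξ) = νs (ν ξ))
    (μs : g →ₗ[ℝ] Module.Dual ℝ V)
    (hμs : ∀ (r : g) (X : V),
      μs r X = 2 * bg r (ν (Binv (J X)) - Atil (ν (Binv X)))) :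
    let A : g →ₗ[ℝ] g := Atil - (ν ∘ₗ Binv ∘ₗ νs)
    let C : V →ₗ[ℝ] Module.Dual ℝ V :=
      -(Binv ∘ₗ νs ∘ₗ Atil ∘ₗ ν ∘ₗ Binv) - Binv - (J.dualMap ∘ₗ Binv ∘ₗ J)
    let μ : V →ₗ[ℝ] g := (ν ∘ₗ Binv ∘ₗ J) - (Atil ∘ₗ ν ∘ₗ Binv)
    (∀ u v : V × Module.Dual ℝ V × g,
        pairE bg (JblockE J B C A μ ν νs μs u) v = - pairE bg u (JblockE J B C A μ ν νs μs v)) ∧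
    (∀ u : V × Module.Dual ℝ V × g,
        JblockE J B C A μ ν νs μs (JblockE J B C A μ ν νs μs u) = -u) :=
  stmt_4_general bg hbg_symm B Binv hB1 hB2 hBskew Atil hAskew hAsq J ν νs hνs hJB μs hμs
end

section
/- (Hitchin pair, linear algebra version.) Let V be a finite-dimensional real vector space, B : V* → V a bijective linear map with B* = -B, and J ∈ End(V) satisfying JB = BJ*. Define C := -B⁻¹ - J*B⁻¹J : V → V*. Then the endomorphism 𝒥 of V ⊕ V* given in block form by 𝒥(X + ξ) = (JX + Bξ) + (CX - J*ξ) satisfies 𝒥² = -Id and is skew-symmetric with respect to the canonical pairing ⟨X+ξ, Y+η⟩ = (1/2)(η(X) + ξ(Y)). -/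
open Module

section HitchinPair

variable {R V : Type*} [CommRing R] [AddCommGroup V] [Module R V]
  {B : Dual R V →ₗ[R] V} {Binv : V →ₗ[R] Dual R V} {J : V →ₗ[R] V}

theorem inv_apply_comp_eq_dualMap (hB1 : ∀ ξ, Binv (B ξ) = ξ) (hB2 : ∀ X, B (Binv X) = X)
    (hJB : ∀ ξ, J (B ξ) = B (J.dualMap ξ)) (X : V) :
    Binv (J X) = J.dualMap (Binv X) := by
  rw [← hB2 X, hJB, hB1, hB2]

theorem inv_apply_skew (hB2 : ∀ X, B (Binv X) = X)
    (hBskew : ∀ ξ η : Dual R V, η (B ξ) = -ξ (B η)) (X Y : V) :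
    Binv X Y = -Binv Y X := by
  simpa only [hB2] using hBskew (Binv Y) (Binv X)

variable (B Binv J)

def hitchinC : V →ₗ[R] Dual R V := -Binv - J.dualMap ∘ₗ Binv ∘ₗ J

def hitchinMap (u : V × Dual R V) : V × Dual R V :=
  (J u.1 + B u.2, hitchinC Binv J u.1 - J.dualMap u.2)

variable {B Binv J}

theorem hitchinMap_hitchinMap (hB1 : ∀ ξ, Binv (B ξ) = ξ) (hB2 : ∀ X, B (Binv X) = X)
    (hJB : ∀ ξ, J (B ξ) = B (J.dualMap ξ)) (u : V × Dual R V) :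
    hitchinMap B Binv J (hitchinMap B Binv J u) = -u := by
  have hBinvJ := inv_apply_comp_eq_dualMap hB1 hB2 hJB
  obtain ⟨X, ξ⟩ := u
  simp only [hitchinMap, hitchinC, Prod.neg_mk, Prod.mk.injEq, map_add, map_sub, map_neg,
    LinearMap.sub_apply, LinearMap.neg_apply, LinearMap.comp_apply, hB1, hB2, hBinvJ]
  constructor
  · rw [← hJB, ← hJB, ← hJB, hB2]
    abel
  · abel

theorem hitchinMap_skew (hB2 : ∀ X, B (Binv X) = X)
    (hBskew : ∀ ξ η : Dual R V, η (B ξ) = -ξ (B η)) (u v : V × Dual R V) :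
    v.2 (hitchinMap B Binv J u).1 + (hitchinMap B Binv J u).2 v.1
      = -((hitchinMap B Binv J v).2 u.1 + u.2 (hitchinMap B Binv J v).1) := by
  obtain ⟨X, ξ⟩ := u
  obtain ⟨Y, η⟩ := v
  simp only [hitchinMap, hitchinC, map_add, LinearMap.sub_apply, LinearMap.neg_apply,
    LinearMap.comp_apply, LinearMap.dualMap_apply', hBskew ξ η,
    inv_apply_skew hB2 hBskew X Y, inv_apply_skew hB2 hBskew (J X) (J Y)]
  ring

end HitchinPair

theorem stmt_5_general {V : Type*} [AddCommGroup V] [Module ℝ V]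
    (B : Module.Dual ℝ V →ₗ[ℝ] V) (Binv : V →ₗ[ℝ] Module.Dual ℝ V)
    (hB1 : ∀ ξ : Module.Dual ℝ V, Binv (B ξ) = ξ)
    (hB2 : ∀ X : V, B (Binv X) = X)
    (hBskew : ∀ ξ η : Module.Dual ℝ V, η (B ξ) = - ξ (B η))
    (J : V →ₗ[ℝ] V)
    (hJB : ∀ ξ : Module.Dual ℝ V, J (B ξ) = B (J.dualMap ξ)) :
    let C : V →ₗ[ℝ] Module.Dual ℝ V := -Binv - (J.dualMap ∘ₗ Binv ∘ₗ J)
    let 𝒥 : V × Module.Dual ℝ V → V × Module.Dual ℝ V :=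
      fun u => (J u.1 + B u.2, C u.1 - J.dualMap u.2)
    (∀ u : V × Module.Dual ℝ V, 𝒥 (𝒥 u) = -u) ∧
    (∀ u v : V × Module.Dual ℝ V,
      (1 / 2 : ℝ) * (v.2 (𝒥 u).1 + (𝒥 u).2 v.1)
        = -((1 / 2 : ℝ) * ((𝒥 v).2 u.1 + u.2 (𝒥 v).1))) :=
  ⟨hitchinMap_hitchinMap hB1 hB2 hJB,
    fun u v => (congrArg (_ * ·) (hitchinMap_skew hB2 hBskew u v)).trans (mul_neg _ _)⟩

/-- **Hitchin pair, linear algebra version.** If `B : V* → V` is bijective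
with `B* = -B` and `J ∈ End(V)` satisfies `JB = BJ*`, then the block endomorphism
`𝒥(X+ξ) = (JX + Bξ) + (CX - J*ξ)` with `C := -B⁻¹ - J*B⁻¹J` satisfies `𝒥² = -Id` and
is skew-symmetric for the canonical pairing on `V ⊕ V*`. -/
theorem stmt_5 {V : Type*} [AddCommGroup V] [Module ℝ V] [FiniteDimensional ℝ V]
    (B : Module.Dual ℝ V →ₗ[ℝ] V) (Binv : V →ₗ[ℝ] Module.Dual ℝ V)
    (hB1 : ∀ ξ : Module.Dual ℝ V, Binv (B ξ) = ξ)
    (hB2 : ∀ X : V, B (Binv X) = X)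
    (hBskew : ∀ ξ η : Module.Dual ℝ V, η (B ξ) = - ξ (B η))
    (J : V →ₗ[ℝ] V)
    (hJB : ∀ ξ : Module.Dual ℝ V, J (B ξ) = B (J.dualMap ξ)) :
    let C : V →ₗ[ℝ] Module.Dual ℝ V := -Binv - (J.dualMap ∘ₗ Binv ∘ₗ J)
    let 𝒥 : V × Module.Dual ℝ V → V × Module.Dual ℝ V :=
      fun u => (J u.1 + B u.2, C u.1 - J.dualMap u.2)
    (∀ u : V × Module.Dual ℝ V, 𝒥 (𝒥 u) = -u) ∧
    (∀ u v : V × Module.Dual ℝ V,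
      (1 / 2 : ℝ) * (v.2 (𝒥 u).1 + (𝒥 u).2 v.1)
        = -((1 / 2 : ℝ) * ((𝒥 v).2 u.1 + u.2 (𝒥 v).1))) :=
  stmt_5_general B Binv hB1 hB2 hBskew J hJB
end

section
/- Let g be the 6-dimensional real nilpotent Lie algebra with basis e₁,…,e₆ and nonzero brackets [e₁,e₂] = e₄, [e₁,e₄] = e₅, [e₂,e₄] = e₆ (all other brackets of basis vectors zero). Then the symmetric bilinear form β₀ determined by β₀(e₁,e₆) = β₀(e₆,e₁) = 1, β₀(e₂,e₅) = β₀(e₅,e₂) = -1, β₀(e₃,e₃) = -1, β₀(e₄,e₄) = 1, and all other components zero, is ad-invariant (β₀([x,y],z) + β₀(y,[x,z]) = 0 for all x,y,z) and nondegenerate of signature (3,3). -/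
/-!
Relative to the basis, `β ⁅x, y⁆ z` is the alternating 3-form `e⁰ ∧ e¹ ∧ e³` evaluated at
`(x, y, z)`; with the symmetry of `β` this gives `β ⁅x, y⁆ z = -β ⁅x, z⁆ y = -β y ⁅x, z⁆`,
which only has to be checked on basis vectors. The hyperbolic planes `⟨e 0, e 5⟩` and
`⟨e 1, e 4⟩` split into a positive and a negative line each, so together with `e 3` and `e 2`
one gets a basis on which `β` is `diag(1, 1, 1, -1, -1, -1)`; a diagonal form with no
isotropic basis vector is nondegenerate.
-/

open Module

namespace LinearMap.BilinForm

theorem lieInvariant_of_basis {ι R L : Type*} [CommRing R] [LieRing L] [LieAlgebra R L]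
    (b : Basis ι R L) {Φ : LinearMap.BilinForm R L}
    (h : ∀ i j k, Φ ⁅b i, b j⁆ (b k) = -Φ (b j) ⁅b i, b k⁆) : Φ.lieInvariant L := by
  intro x
  induction b.mem_span x using Submodule.span_induction with
  | mem x hx =>
    obtain ⟨i, rfl⟩ := hx
    have hi := ext_basis b (B := Φ ∘ₗ LieModule.toEnd R L L (b i))
      (F₂ := -Φ.compl₂ (LieModule.toEnd R L L (b i))) (h i)
    exact fun y z => LinearMap.congr_fun₂ hi y z
  | zero => simp
  | add x x' _ _ hx hx' =>
    intro y z
    simp only [add_lie, map_add, LinearMap.add_apply, hx, hx', neg_add]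
  | smul a x _ hx => intro y z; simp [hx]

theorem exists_basis_eq_of_iIsOrtho {ι K V : Type*} [Fintype ι] [Field K] [AddCommGroup V]
    [Module K V] [FiniteDimensional K V] {B : LinearMap.BilinForm K V} {v : ι → V}
    (hO : B.iIsOrtho v) (hv : ∀ i, B (v i) (v i) ≠ 0) (hcard : Fintype.card ι = finrank K V) :
    ∃ f : Basis ι K V, ⇑f = v :=
  ⟨basisOfLinearIndependentOfCardEqFinrank' v (linearIndependent_of_iIsOrtho hO hv) hcard,
    coe_basisOfLinearIndependentOfCardEqFinrank' ..⟩

end LinearMap.BilinForm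

section

variable {g : Type*} [LieRing g] [LieAlgebra ℝ g] (e : Basis (Fin 6) ℝ g)

theorem lie_basis_eq (h12 : ⁅e 0, e 1⁆ = e 3) (h14 : ⁅e 0, e 3⁆ = e 4) (h24 : ⁅e 1, e 3⁆ = e 5)
    (h0 : ∀ i j : Fin 6,
      (i, j) ∉ ({(0,1), (1,0), (0,3), (3,0), (1,3), (3,1)} : Set (Fin 6 × Fin 6)) →
      ⁅e i, e j⁆ = 0) (i j : Fin 6) :
    ⁅e i, e j⁆ = (![![0, e 3, 0, e 4, 0, 0],
                    ![-e 3, 0, 0, e 5, 0, 0],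
                    ![0, 0, 0, 0, 0, 0],
                    ![-e 4, -e 5, 0, 0, 0, 0],
                    ![0, 0, 0, 0, 0, 0],
                    ![0, 0, 0, 0, 0, 0]] : Fin 6 → Fin 6 → g) i j := by
  fin_cases i <;> fin_cases j <;>
    simp [h12, h14, h24, ← lie_skew (e 1) (e 0), ← lie_skew (e 3) (e 0),
      ← lie_skew (e 3) (e 1)] <;>
    exact h0 _ _ (by simp)

variable {β : LinearMap.BilinForm ℝ g}

theorem lieInvariant_of_basis_eq (h12 : ⁅e 0, e 1⁆ = e 3) (h14 : ⁅e 0, e 3⁆ = e 4)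
    (h24 : ⁅e 1, e 3⁆ = e 5)
    (h0 : ∀ i j : Fin 6,
      (i, j) ∉ ({(0,1), (1,0), (0,3), (3,0), (1,3), (3,1)} : Set (Fin 6 × Fin 6)) →
      ⁅e i, e j⁆ = 0)
    (hβ : ∀ i j : Fin 6, β (e i) (e j) =
      (![![0,0,0,0,0,1], ![0,0,0,0,-1,0], ![0,0,-1,0,0,0],
         ![0,0,0,1,0,0], ![0,-1,0,0,0,0], ![1,0,0,0,0,0]] : Fin 6 → Fin 6 → ℝ) i j) :
    β.lieInvariant g := by
  refine LinearMap.BilinForm.lieInvariant_of_basis e fun i j k => ?_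
  fin_cases i <;> fin_cases j <;> fin_cases k <;> simp [lie_basis_eq e h12 h14 h24 h0, hβ]

theorem exists_basis_diagonal_of_basis_eq
    (hβ : ∀ i j : Fin 6, β (e i) (e j) =
      (![![0,0,0,0,0,1], ![0,0,0,0,-1,0], ![0,0,-1,0,0,0],
         ![0,0,0,1,0,0], ![0,-1,0,0,0,0], ![1,0,0,0,0,0]] : Fin 6 → Fin 6 → ℝ) i j) :
    ∃ f : Basis (Fin 6) ℝ g, (∀ i j : Fin 6, i ≠ j → β (f i) (f j) = 0) ∧
      (∀ i : Fin 6, β (f i) (f i) = if (i : ℕ) < 3 then 1 else -1) := by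
  let v : Fin 6 → g := ![e 0 + (2⁻¹ : ℝ) • e 5, e 3, e 1 - (2⁻¹ : ℝ) • e 4,
    e 2, e 0 - (2⁻¹ : ℝ) • e 5, e 1 + (2⁻¹ : ℝ) • e 4]
  have hv : ∀ i j, β (v i) (v j) = if i = j then (if (i : ℕ) < 3 then 1 else -1) else 0 := by
    intro i j
    fin_cases i <;> fin_cases j <;> simp [v, hβ] <;> norm_num
  have : FiniteDimensional ℝ g := e.finiteDimensional_of_finite
  obtain ⟨f, hf⟩ := LinearMap.BilinForm.exists_basis_eq_of_iIsOrtho (B := β) (v := v)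
    (LinearMap.BilinForm.iIsOrtho_def.2 fun i j hij => by rw [hv, if_neg hij])
    (fun i => by rw [hv, if_pos rfl]; split_ifs <;> norm_num)
    (by simp [finrank_eq_card_basis e])
  exact ⟨f, fun i j hij => by rw [hf, hv, if_neg hij], fun i => by rw [hf, hv, if_pos rfl]⟩

end

/-- On the 6-dimensional nilpotent Lie algebra with nonzero brackets
`[e₁,e₂] = e₄`, `[e₁,e₄] = e₅`, `[e₂,e₄] = e₆` (here 0-indexed), the symmetric bilinear
form `β₀ = 2e¹e⁶ - 2e²e⁵ - (e³)² + (e⁴)²` is ad-invariant and nondegenerate of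
signature `(3,3)`. -/
theorem stmt_13 {g : Type*} [LieRing g] [LieAlgebra ℝ g]
    (e : Module.Basis (Fin 6) ℝ g)
    (h12 : ⁅e 0, e 1⁆ = e 3) (h14 : ⁅e 0, e 3⁆ = e 4) (h24 : ⁅e 1, e 3⁆ = e 5)
    (h0 : ∀ i j : Fin 6,
      (i, j) ∉ ({(0,1), (1,0), (0,3), (3,0), (1,3), (3,1)} : Set (Fin 6 × Fin 6)) →
      ⁅e i, e j⁆ = 0)
    (β : LinearMap.BilinForm ℝ g)
    (hβ : ∀ i j : Fin 6, β (e i) (e j) =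
      (![![0,0,0,0,0,1], ![0,0,0,0,-1,0], ![0,0,-1,0,0,0],
         ![0,0,0,1,0,0], ![0,-1,0,0,0,0], ![1,0,0,0,0,0]] : Fin 6 → Fin 6 → ℝ) i j) :
    (∀ x y z : g, β ⁅x, y⁆ z + β y ⁅x, z⁆ = 0) ∧
    (∀ x : g, (∀ y : g, β x y = 0) → x = 0) ∧
    (∃ f : Module.Basis (Fin 6) ℝ g,
      (∀ i j : Fin 6, i ≠ j → β (f i) (f j) = 0) ∧
      (∀ i : Fin 6, β (f i) (f i) = if (i : ℕ) < 3 then 1 else -1)) := by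
  have hinv := lieInvariant_of_basis_eq e h12 h14 h24 h0 hβ
  obtain ⟨f, hortho, hdiag⟩ := exists_basis_diagonal_of_basis_eq e hβ
  refine ⟨fun x y z => by rw [hinv, neg_add_cancel], ?_, f, hortho, hdiag⟩
  exact LinearMap.IsOrthoᵢ.separatingLeft_of_not_isOrtho_basis_self f hortho fun i => by
    rw [hdiag]; split_ifs <;> norm_num
end

section
/- Let g be the 6-dimensional real nilpotent Lie algebra with basis e₁,…,e₆ and nonzero brackets [e₁,e₂] = e₄, [e₁,e₃] = e₅, [e₂,e₃] = e₆. Then: (a) every ad-invariant symmetric bilinear form β on g satisfies β(e₄,e₄) = β(e₄,e₅) = β(e₄,e₆) = β(e₅,e₅) = β(e₅,e₆) = β(e₆,e₆) = 0 and β(e₃,e₄) = -β(e₂,e₅) = β(e₁,e₆); (b) if β is moreover nondegenerate, then λ := β(e₃,e₄) ≠ 0. -/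
/-!
Invariance gives `β ⁅x, y⁆ z = -β y ⁅x, z⁆`, so `β ⁅x, y⁆ z = 0` whenever `x` commutes with `z`.
Each of `e₄, e₅, e₆` is a bracket `⁅eᵢ, eⱼ⁆` whose left factor `eᵢ` commutes with the whole
centre, which kills `β` on the centre; the same identity relates the three pairings
`β(e₃,e₄), β(e₂,e₅), β(e₁,e₆)`. Finally `β(e₄, ·)` vanishes on `e₁, e₂` and on the centre,
so if it also vanished on `e₃` then `e₄` would lie in the radical of `β`.
In Lean the basis is indexed from `0`, so `eₖ` is `e (k - 1)`.
-/

namespace LinearMap.BilinForm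

variable {R L : Type*} [CommRing R] [LieRing L] [LieAlgebra R L] {β : LinearMap.BilinForm R L}

theorem apply_lie_left_eq_neg (hβ : ∀ x y z : L, β ⁅x, y⁆ z + β y ⁅x, z⁆ = 0) (x y z : L) :
    β ⁅x, y⁆ z = -β y ⁅x, z⁆ :=
  eq_neg_of_add_eq_zero_left (hβ x y z)

theorem apply_lie_left_eq_zero_of_lie_eq_zero (hβ : ∀ x y z : L, β ⁅x, y⁆ z + β y ⁅x, z⁆ = 0)
    {x y z : L} (hxz : ⁅x, z⁆ = 0) : β ⁅x, y⁆ z = 0 := by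
  rw [apply_lie_left_eq_neg hβ, hxz, map_zero, neg_zero]

theorem apply_lie_self_right (hβ : ∀ x y z : L, β ⁅x, y⁆ z + β y ⁅x, z⁆ = 0) (x y : L) :
    β ⁅x, y⁆ y = 0 := by
  rw [← lie_skew, map_neg, LinearMap.neg_apply, apply_lie_left_eq_zero_of_lie_eq_zero hβ (lie_self y),
    neg_zero]

theorem eq_zero_of_apply_basis_eq_zero {ι : Type*} (hβ : ∀ x : L, (∀ y : L, β x y = 0) → x = 0)
    (b : Module.Basis ι R L) {v : L} (hv : ∀ i, β v (b i) = 0) : v = 0 :=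
  hβ v fun y => by rw [b.ext (f₂ := 0) hv, LinearMap.zero_apply]

end LinearMap.BilinForm

open LinearMap.BilinForm in
/-- For the 6-dimensional 2-step nilpotent Lie algebra with nonzero
brackets `[e₁,e₂] = e₄`, `[e₁,e₃] = e₅`, `[e₂,e₃] = e₆` (0-indexed below):
(a) every ad-invariant symmetric bilinear form `β` satisfies
`β(e₄,e₄) = β(e₄,e₅) = β(e₄,e₆) = β(e₅,e₅) = β(e₅,e₆) = β(e₆,e₆) = 0` and
`β(e₃,e₄) = -β(e₂,e₅) = β(e₁,e₆)`; (b) if `β` is nondegenerate then `β(e₃,e₄) ≠ 0`. -/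
theorem stmt_15 {g : Type*} [LieRing g] [LieAlgebra ℝ g]
    (e : Module.Basis (Fin 6) ℝ g)
    (h12 : ⁅e 0, e 1⁆ = e 3) (h13 : ⁅e 0, e 2⁆ = e 4) (h23 : ⁅e 1, e 2⁆ = e 5)
    (h0 : ∀ i j : Fin 6,
      (i, j) ∉ ({(0,1), (1,0), (0,2), (2,0), (1,2), (2,1)} : Set (Fin 6 × Fin 6)) →
      ⁅e i, e j⁆ = 0)
    (β : LinearMap.BilinForm ℝ g)
    (hβsymm : ∀ x y : g, β x y = β y x)
    (hβinv : ∀ x y z : g, β ⁅x, y⁆ z + β y ⁅x, z⁆ = 0) :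
    (β (e 3) (e 3) = 0 ∧ β (e 3) (e 4) = 0 ∧ β (e 3) (e 5) = 0 ∧
      β (e 4) (e 4) = 0 ∧ β (e 4) (e 5) = 0 ∧ β (e 5) (e 5) = 0) ∧
    (β (e 2) (e 3) = - β (e 1) (e 4) ∧ β (e 2) (e 3) = β (e 0) (e 5)) ∧
    ((∀ x : g, (∀ y : g, β x y = 0) → x = 0) → β (e 2) (e 3) ≠ 0) := by
  have vanish : ∀ {i j k l : Fin 6}, ⁅e i, e j⁆ = e k → ⁅e i, e l⁆ = 0 → β (e k) (e l) = 0 :=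
    fun hij hil => hij ▸ apply_lie_left_eq_zero_of_lie_eq_zero hβinv hil
  have h33 := vanish h12 (h0 0 3 (by simp))
  have h34 := vanish h12 (h0 0 4 (by simp))
  have h35 := vanish h12 (h0 0 5 (by simp))
  have h44 := vanish h13 (h0 0 4 (by simp))
  have h45 := vanish h13 (h0 0 5 (by simp))
  have h55 := vanish h23 (h0 1 5 (by simp))
  have h23_14 : β (e 2) (e 3) = -β (e 1) (e 4) := by
    rw [hβsymm, ← h12, ← h13, apply_lie_left_eq_neg hβinv]
  have h23_05 : β (e 2) (e 3) = β (e 0) (e 5) := by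
    rw [hβsymm (e 0), ← h23, apply_lie_left_eq_neg hβinv, ← lie_skew, h12, map_neg, neg_neg]
  refine ⟨⟨h33, h34, h35, h44, h45, h55⟩, ⟨h23_14, h23_05⟩, fun hnd hvanish => ?_⟩
  refine e.ne_zero 3 (eq_zero_of_apply_basis_eq_zero hnd e fun i => ?_)
  fin_cases i
  · exact vanish h12 (lie_self _)
  · exact h12 ▸ apply_lie_self_right hβinv (e 0) (e 1)
  · rwa [hβsymm]
  exacts [h33, h34, h35]
end

section
/- Let g be the 6-dimensional real Lie algebra with nonzero brackets [e₁,e₂] = e₄, [e₁,e₃] = e₅, [e₂,e₃] = e₆, and let β be any ad-invariant nondegenerate symmetric bilinear form on g. Then for every μ ∈ ℂ with nonzero imaginary part, the vector v = e₃ - μe₄ ∈ g ⊗ ℂ satisfies β_ℂ(v, v) ≠ 0, where β_ℂ is the ℂ-bilinear extension of β. In particular, no maximally isotropic complex subspace of (g ⊗ ℂ, β_ℂ) contains a vector of the form e₃ - μe₄ with μ ∉ ℝ. -/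
open TensorProduct

/-!
Ad-invariance gives `β([x,y], z) = -β(y, [x,z])`. With `x = e₁`, `y = e₂` this shows that
`e₄ = [e₁,e₂]` is `β`-orthogonal to `e₁, e₄, e₅, e₆` (which commute with `e₁`) and, by symmetry,
to `e₂`; nondegeneracy then forces `β(e₃,e₄) ≠ 0`, and `β(e₄,e₄) = 0`. Hence
`β_ℂ(e₃ - μe₄, e₃ - μe₄) = β(e₃,e₃) - 2μ β(e₃,e₄)` has imaginary part `-2 Im μ · β(e₃,e₄) ≠ 0`.
(1-based indices: `eᵢ` is `e (i - 1)`.)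
-/

namespace LinearMap.BilinForm

section LieInvariant

variable {L : Type*} [LieRing L] [LieAlgebra ℝ L] {β : LinearMap.BilinForm ℝ L}

lemma apply_lie_eq_zero_of_lie_eq_zero (hβinv : ∀ x y z : L, β ⁅x, y⁆ z + β y ⁅x, z⁆ = 0)
    {x z : L} (hxz : ⁅x, z⁆ = 0) (y : L) : β ⁅x, y⁆ z = 0 := by
  simpa [hxz] using hβinv x y z

lemma apply_lie_right_self (hβsymm : ∀ x y : L, β x y = β y x)
    (hβinv : ∀ x y z : L, β ⁅x, y⁆ z + β y ⁅x, z⁆ = 0) (x y : L) : β ⁅x, y⁆ y = 0 := by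
  have h := hβinv x y y
  rw [hβsymm y] at h
  linarith

end LieInvariant

lemma exists_apply_basis_ne_zero {ι M : Type*} [AddCommGroup M] [Module ℝ M]
    {β : LinearMap.BilinForm ℝ M} (hβnd : ∀ x : M, (∀ y : M, β x y = 0) → x = 0)
    (b : Module.Basis ι ℝ M) {x : M} (hx : x ≠ 0) : ∃ i, β x (b i) ≠ 0 := by
  by_contra! h
  exact hx (hβnd x fun y => by rw [b.ext (f₁ := β x) (f₂ := 0) h]; rfl)

lemma baseChange_tmul_sub_smul_tmul_self {M : Type*} [AddCommGroup M] [Module ℝ M]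
    (β : LinearMap.BilinForm ℝ M) (hβsymm : ∀ x y : M, β x y = β y x) (a b : M) (μ : ℂ) :
    β.baseChange ℂ ((1 : ℂ) ⊗ₜ a - μ • (1 : ℂ) ⊗ₜ b) ((1 : ℂ) ⊗ₜ a - μ • (1 : ℂ) ⊗ₜ b)
      = (β a a : ℂ) - 2 * μ * (β a b : ℂ) + μ ^ 2 * (β b b : ℂ) := by
  simp only [map_sub, map_smul, LinearMap.sub_apply, LinearMap.smul_apply, baseChange_tmul,
    smul_eq_mul, mul_one, Complex.real_smul, hβsymm b a]
  ring

lemma baseChange_tmul_sub_smul_tmul_self_ne_zero {M : Type*} [AddCommGroup M] [Module ℝ M]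
    (β : LinearMap.BilinForm ℝ M) (hβsymm : ∀ x y : M, β x y = β y x) {a b : M}
    (hbb : β b b = 0) (hab : β a b ≠ 0) {μ : ℂ} (hμ : μ.im ≠ 0) :
    β.baseChange ℂ ((1 : ℂ) ⊗ₜ a - μ • (1 : ℂ) ⊗ₜ b) ((1 : ℂ) ⊗ₜ a - μ • (1 : ℂ) ⊗ₜ b) ≠ 0 := by
  rw [baseChange_tmul_sub_smul_tmul_self β hβsymm, hbb]
  intro h
  have him := congrArg Complex.im h
  simp only [Complex.ofReal_zero, mul_zero, add_zero, Complex.sub_im, Complex.ofReal_im,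
    Complex.mul_im, Complex.re_ofNat, Complex.im_ofNat, zero_mul, Complex.ofReal_re,
    Complex.zero_im] at him
  have : μ.im * β a b = 0 := by linarith
  exact mul_ne_zero hμ hab this

end LinearMap.BilinForm

open LinearMap.BilinForm in
theorem stmt_16_general {g : Type*} [LieRing g] [LieAlgebra ℝ g]
    (e : Module.Basis (Fin 6) ℝ g)
    (h12 : ⁅e 0, e 1⁆ = e 3)
    (h0 : ∀ i j : Fin 6,
      (i, j) ∉ ({(0,1), (1,0), (0,2), (2,0), (1,2), (2,1)} : Set (Fin 6 × Fin 6)) →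
      ⁅e i, e j⁆ = 0)
    (β : LinearMap.BilinForm ℝ g)
    (hβsymm : ∀ x y : g, β x y = β y x)
    (hβinv : ∀ x y z : g, β ⁅x, y⁆ z + β y ⁅x, z⁆ = 0)
    (hβnd : ∀ x : g, (∀ y : g, β x y = 0) → x = 0)
    (μ : ℂ) (hμ : μ.im ≠ 0) :
    let v : ℂ ⊗[ℝ] g := (1 : ℂ) ⊗ₜ[ℝ] e 2 - μ • ((1 : ℂ) ⊗ₜ[ℝ] e 3)
    (β.baseChange ℂ) v v ≠ 0 ∧
    ∀ L : Submodule ℂ (ℂ ⊗[ℝ] g),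
      (∀ u ∈ L, ∀ w ∈ L, (β.baseChange ℂ) u w = 0) →
      Module.finrank ℂ L = 3 → v ∉ L := by
  intro v
  have orth (j : Fin 6) (hj : ⁅e 0, e j⁆ = 0) : β (e 3) (e j) = 0 := by
    rw [← h12]; exact apply_lie_eq_zero_of_lie_eq_zero hβinv hj _
  have hβ23 : β (e 2) (e 3) ≠ 0 := by
    obtain ⟨i, hi⟩ := exists_apply_basis_ne_zero hβnd e (e.ne_zero 3)
    rw [hβsymm]
    fin_cases i
    · exact absurd (orth 0 (h0 0 0 (by decide))) hi
    · exact absurd (h12 ▸ apply_lie_right_self hβsymm hβinv (e 0) (e 1)) hi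
    · exact hi
    all_goals exact absurd (orth _ (h0 _ _ (by decide))) hi
  have hv : (β.baseChange ℂ) v v ≠ 0 :=
    baseChange_tmul_sub_smul_tmul_self_ne_zero β hβsymm (orth 3 (h0 0 3 (by decide))) hβ23 hμ
  exact ⟨hv, fun L hiso _ hvL => hv (hiso v hvL v hvL)⟩

/-- For the 6-dimensional 2-step nilpotent Lie algebra with nonzero
brackets `[e₁,e₂] = e₄`, `[e₁,e₃] = e₅`, `[e₂,e₃] = e₆` (0-indexed below) and any
ad-invariant nondegenerate symmetric bilinear form `β`, for every `μ ∈ ℂ` with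
nonzero imaginary part the vector `v = e₃ - μe₄ ∈ g ⊗ ℂ` satisfies `β_ℂ(v,v) ≠ 0`;
in particular no maximally isotropic complex subspace of `(g ⊗ ℂ, β_ℂ)` contains
such a vector. -/
theorem stmt_16 {g : Type*} [LieRing g] [LieAlgebra ℝ g]
    (e : Module.Basis (Fin 6) ℝ g)
    (h12 : ⁅e 0, e 1⁆ = e 3) (h13 : ⁅e 0, e 2⁆ = e 4) (h23 : ⁅e 1, e 2⁆ = e 5)
    (h0 : ∀ i j : Fin 6,
      (i, j) ∉ ({(0,1), (1,0), (0,2), (2,0), (1,2), (2,1)} : Set (Fin 6 × Fin 6)) →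
      ⁅e i, e j⁆ = 0)
    (β : LinearMap.BilinForm ℝ g)
    (hβsymm : ∀ x y : g, β x y = β y x)
    (hβinv : ∀ x y z : g, β ⁅x, y⁆ z + β y ⁅x, z⁆ = 0)
    (hβnd : ∀ x : g, (∀ y : g, β x y = 0) → x = 0)
    (μ : ℂ) (hμ : μ.im ≠ 0) :
    let v : ℂ ⊗[ℝ] g := (1 : ℂ) ⊗ₜ[ℝ] e 2 - μ • ((1 : ℂ) ⊗ₜ[ℝ] e 3)
    (β.baseChange ℂ) v v ≠ 0 ∧
    ∀ L : Submodule ℂ (ℂ ⊗[ℝ] g),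
      (∀ u ∈ L, ∀ w ∈ L, (β.baseChange ℂ) u w = 0) →
      Module.finrank ℂ L = 3 → v ∉ L :=
  stmt_16_general e h12 h0 β hβsymm hβinv hβnd μ hμ
end

section
/- Let 𝒥 be a skew-symmetric complex structure on E = V ⊕ V* ⊕ g with components (J, A, B, C, μ, ν), and let I be the automorphism of E determined by a triple (K, Φ, β) via I(X) = X + i_Xβ - Φ*Φ(X) + Φ(X), I(η) = η, I(r) = -2Φ*K(r) + K(r). Then the transformed structure 𝒥₁ = I⁻¹ ∘ 𝒥 ∘ I is again skew-symmetric with 𝒥₁² = -Id, and its B-component equals B; in particular B is bijective if and only if the B-component of 𝒥₁ is bijective. Moreover the ν-component of 𝒥₁ is ν₁ = K⁻¹(ν - ΦB). -/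
/-- The map `I` on `E = V ⊕ V* ⊕ g` determined by a triple `(K, Φ, β)`. -/
noncomputable def ImapE {V g : Type*} [AddCommGroup V] [Module ℝ V] [AddCommGroup g] [Module ℝ g]
    (K : g →ₗ[ℝ] g) (Φ : V →ₗ[ℝ] g) (Φs : g →ₗ[ℝ] Module.Dual ℝ V)
    (β : V →ₗ[ℝ] Module.Dual ℝ V)
    (u : V × Module.Dual ℝ V × g) : V × Module.Dual ℝ V × g :=
  (u.1,
   β u.1 - Φs (Φ u.1) + u.2.1 - (2 : ℝ) • Φs (K u.2.2),
   Φ u.1 + K u.2.2)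

section Conjugation

variable {E : Type*} {f finv T : E → E}

theorem skew_conj (p : E → E → ℝ) (hr : Function.RightInverse finv f)
    (hp : ∀ u v, p (f u) (f v) = p u v) (hT : ∀ u v, p (T u) v = -p u (T v)) (u v : E) :
    p (finv (T (f u))) v = -p u (finv (T (f v))) := by
  calc p (finv (T (f u))) v = p (T (f u)) (f v) := by rw [← hp, hr]
    _ = -p (f u) (f (finv (T (f v)))) := by rw [hT, hr]
    _ = -p u (finv (T (f v))) := by rw [hp]

theorem conj_conj_eq_neg [Neg E] (hl : Function.LeftInverse finv f)
    (hr : Function.RightInverse finv f) (hf : ∀ u, f (-u) = -f u) (hT : ∀ u, T (T u) = -u)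
    (u : E) : finv (T (f (finv (T (f u))))) = -u := by
  rw [hr, hT, ← hf, hl]

end Conjugation

section Transformation

variable {V g : Type*} [AddCommGroup V] [Module ℝ V] [AddCommGroup g] [Module ℝ g]
  {K Kinv : g →ₗ[ℝ] g} {Φ : V →ₗ[ℝ] g} {Φs : g →ₗ[ℝ] Module.Dual ℝ V}
  {β : V →ₗ[ℝ] Module.Dual ℝ V}

/- The `β`-terms cancel by skew-symmetry, and the terms `-Φ*Φ X - 2Φ*K r` in the `V*`-slot cancel
the cross terms of `⟨ΦX + Kr, ΦY + Ks⟩`. -/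
theorem pairE_imapE {bg : LinearMap.BilinForm ℝ g} (hbg_symm : ∀ r s : g, bg r s = bg s r)
    (hKisom : ∀ r s : g, bg (K r) (K s) = bg r s) (hΦs : ∀ (s : g) (X : V), Φs s X = bg s (Φ X))
    (hβskew : ∀ X Y : V, β X Y = -β Y X) (u v : V × Module.Dual ℝ V × g) :
    pairE bg (ImapE K Φ Φs β u) (ImapE K Φ Φs β v) = pairE bg u v := by
  simp only [pairE, ImapE, map_add, LinearMap.add_apply, LinearMap.sub_apply,
    LinearMap.smul_apply, smul_eq_mul, hΦs, hKisom]
  rw [hβskew u.1 v.1, hbg_symm (Φ u.1), hbg_symm (K u.2.2), hbg_symm (K v.2.2)]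
  ring

theorem imapE_neg (u : V × Module.Dual ℝ V × g) :
    ImapE K Φ Φs β (-u) = -ImapE K Φ Φs β u := by
  simp only [ImapE, Prod.fst_neg, Prod.snd_neg, map_neg, smul_neg, Prod.neg_mk]
  congr 2 <;> abel

theorem imapE_zero_dual_zero (ξ : Module.Dual ℝ V) : ImapE K Φ Φs β (0, ξ, 0) = (0, ξ, 0) := by
  simp [ImapE]

theorem snd_snd_eq_of_imapE_eq (hK1 : ∀ r : g, Kinv (K r) = r)
    {u w : V × Module.Dual ℝ V × g} (h : ImapE K Φ Φs β u = w) :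
    u.2.2 = Kinv (w.2.2 - Φ w.1) := by
  subst h
  simp [ImapE, hK1]

end Transformation

theorem jblockE_zero_dual_zero {V g : Type*} [AddCommGroup V] [Module ℝ V] [AddCommGroup g]
    [Module ℝ g] (J : V →ₗ[ℝ] V) (B : Module.Dual ℝ V →ₗ[ℝ] V) (C : V →ₗ[ℝ] Module.Dual ℝ V)
    (A : g →ₗ[ℝ] g) (μ : V →ₗ[ℝ] g) (ν : Module.Dual ℝ V →ₗ[ℝ] g)
    (νs : g →ₗ[ℝ] V) (μs : g →ₗ[ℝ] Module.Dual ℝ V) (ξ : Module.Dual ℝ V) :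
    JblockE J B C A μ ν νs μs (0, ξ, 0) = (B ξ, -J.dualMap ξ, ν ξ) := by
  simp [JblockE]

theorem stmt_19_general {V g : Type*} [AddCommGroup V] [Module ℝ V]
    [AddCommGroup g] [Module ℝ g]
    (bg : LinearMap.BilinForm ℝ g)
    (hbg_symm : ∀ r s : g, bg r s = bg s r)
    (J : V →ₗ[ℝ] V) (B : Module.Dual ℝ V →ₗ[ℝ] V) (C : V →ₗ[ℝ] Module.Dual ℝ V)
    (A : g →ₗ[ℝ] g) (μ : V →ₗ[ℝ] g) (ν : Module.Dual ℝ V →ₗ[ℝ] g)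
    (νs : g →ₗ[ℝ] V) (μs : g →ₗ[ℝ] Module.Dual ℝ V)
    (hskew : ∀ u v : V × Module.Dual ℝ V × g,
        pairE bg (JblockE J B C A μ ν νs μs u) v = - pairE bg u (JblockE J B C A μ ν νs μs v))
    (hsq : ∀ u : V × Module.Dual ℝ V × g,
        JblockE J B C A μ ν νs μs (JblockE J B C A μ ν νs μs u) = -u)
    (K : g →ₗ[ℝ] g) (Kinv : g →ₗ[ℝ] g)
    (hK1 : ∀ r : g, Kinv (K r) = r)
    (hKisom : ∀ r s : g, bg (K r) (K s) = bg r s)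
    (Φ : V →ₗ[ℝ] g) (Φs : g →ₗ[ℝ] Module.Dual ℝ V)
    (hΦs : ∀ (s : g) (X : V), Φs s X = bg s (Φ X))
    (β : V →ₗ[ℝ] Module.Dual ℝ V)
    (hβskew : ∀ X Y : V, β X Y = - β Y X)
    (Iinv : V × Module.Dual ℝ V × g → V × Module.Dual ℝ V × g)
    (hIinv : ∀ u : V × Module.Dual ℝ V × g,
      Iinv (ImapE K Φ Φs β u) = u ∧ ImapE K Φ Φs β (Iinv u) = u) :
    let 𝒥₁ : V × Module.Dual ℝ V × g → V × Module.Dual ℝ V × g :=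
      fun u => Iinv (JblockE J B C A μ ν νs μs (ImapE K Φ Φs β u))
    (∀ u v : V × Module.Dual ℝ V × g, pairE bg (𝒥₁ u) v = - pairE bg u (𝒥₁ v)) ∧
    (∀ u : V × Module.Dual ℝ V × g, 𝒥₁ (𝒥₁ u) = -u) ∧
    (∀ ξ : Module.Dual ℝ V, (𝒥₁ (0, ξ, 0)).1 = B ξ) ∧
    ((Function.Bijective fun ξ : Module.Dual ℝ V => B ξ) ↔
      (Function.Bijective fun ξ : Module.Dual ℝ V => (𝒥₁ (0, ξ, 0)).1)) ∧
    (∀ ξ : Module.Dual ℝ V, (𝒥₁ (0, ξ, 0)).2.2 = Kinv (ν ξ - Φ (B ξ))) := by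
  intro 𝒥₁
  have hl : Function.LeftInverse Iinv (ImapE K Φ Φs β) := fun u => (hIinv u).1
  have hr : Function.RightInverse Iinv (ImapE K Φ Φs β) := fun u => (hIinv u).2
  have hI𝒥₁ (ξ : Module.Dual ℝ V) :
      ImapE K Φ Φs β (𝒥₁ (0, ξ, 0)) = (B ξ, -J.dualMap ξ, ν ξ) := by
    rw [hr, imapE_zero_dual_zero, jblockE_zero_dual_zero]
  have hB (ξ : Module.Dual ℝ V) : (𝒥₁ (0, ξ, 0)).1 = B ξ := congrArg Prod.fst (hI𝒥₁ ξ)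
  refine ⟨skew_conj _ hr (pairE_imapE hbg_symm hKisom hΦs hβskew) hskew,
    conj_conj_eq_neg hl hr imapE_neg hsq, hB, by simp only [hB],
    fun ξ => snd_snd_eq_of_imapE_eq hK1 (hI𝒥₁ ξ)⟩

/-- For a skew-symmetric complex structure `𝒥` on `E = V ⊕ V* ⊕ g`
and the automorphism `I` determined by `(K, Φ, β)`, the transformed structure
`𝒥₁ = I⁻¹ ∘ 𝒥 ∘ I` is again a skew-symmetric complex structure, its `B`-component
equals `B` (so `𝒥₁` is non-degenerate iff `𝒥` is), and its `ν`-component is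
`ν₁ = K⁻¹(ν - ΦB)`. -/
theorem stmt_19 {V g : Type*} [AddCommGroup V] [Module ℝ V] [FiniteDimensional ℝ V]
    [AddCommGroup g] [Module ℝ g] [FiniteDimensional ℝ g]
    (bg : LinearMap.BilinForm ℝ g)
    (hbg_symm : ∀ r s : g, bg r s = bg s r)
    (hbg_nd : ∀ r : g, (∀ s : g, bg r s = 0) → r = 0)
    (J : V →ₗ[ℝ] V) (B : Module.Dual ℝ V →ₗ[ℝ] V) (C : V →ₗ[ℝ] Module.Dual ℝ V)
    (A : g →ₗ[ℝ] g) (μ : V →ₗ[ℝ] g) (ν : Module.Dual ℝ V →ₗ[ℝ] g)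
    (νs : g →ₗ[ℝ] V) (μs : g →ₗ[ℝ] Module.Dual ℝ V)
    (hνs : ∀ (r : g) (ξ : Module.Dual ℝ V), ξ (νs r) = 2 * bg r (ν ξ))
    (hμs : ∀ (r : g) (X : V), μs r X = 2 * bg r (μ X))
    (hskew : ∀ u v : V × Module.Dual ℝ V × g,
        pairE bg (JblockE J B C A μ ν νs μs u) v = - pairE bg u (JblockE J B C A μ ν νs μs v))
    (hsq : ∀ u : V × Module.Dual ℝ V × g,
        JblockE J B C A μ ν νs μs (JblockE J B C A μ ν νs μs u) = -u)
    (K : g →ₗ[ℝ] g) (Kinv : g →ₗ[ℝ] g)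
    (hK1 : ∀ r : g, Kinv (K r) = r) (hK2 : ∀ r : g, K (Kinv r) = r)
    (hKisom : ∀ r s : g, bg (K r) (K s) = bg r s)
    (Φ : V →ₗ[ℝ] g) (Φs : g →ₗ[ℝ] Module.Dual ℝ V)
    (hΦs : ∀ (s : g) (X : V), Φs s X = bg s (Φ X))
    (β : V →ₗ[ℝ] Module.Dual ℝ V)
    (hβskew : ∀ X Y : V, β X Y = - β Y X)
    (Iinv : V × Module.Dual ℝ V × g → V × Module.Dual ℝ V × g)
    (hIinv : ∀ u : V × Module.Dual ℝ V × g,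
      Iinv (ImapE K Φ Φs β u) = u ∧ ImapE K Φ Φs β (Iinv u) = u) :
    let 𝒥₁ : V × Module.Dual ℝ V × g → V × Module.Dual ℝ V × g :=
      fun u => Iinv (JblockE J B C A μ ν νs μs (ImapE K Φ Φs β u))
    (∀ u v : V × Module.Dual ℝ V × g, pairE bg (𝒥₁ u) v = - pairE bg u (𝒥₁ v)) ∧
    (∀ u : V × Module.Dual ℝ V × g, 𝒥₁ (𝒥₁ u) = -u) ∧
    (∀ ξ : Module.Dual ℝ V, (𝒥₁ (0, ξ, 0)).1 = B ξ) ∧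
    ((Function.Bijective fun ξ : Module.Dual ℝ V => B ξ) ↔
      (Function.Bijective fun ξ : Module.Dual ℝ V => (𝒥₁ (0, ξ, 0)).1)) ∧
    (∀ ξ : Module.Dual ℝ V, (𝒥₁ (0, ξ, 0)).2.2 = Kinv (ν ξ - Φ (B ξ))) :=
  stmt_19_general bg hbg_symm J B C A μ ν νs μs hskew hsq K Kinv hK1 hKisom Φ Φs hΦs β hβskew Iinv
    hIinv
end
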